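/- The function dual : ℕ → ℕ is an involution: for every natural number n, dual(dual(n)) = n. -/

import Mathlib

/-- The pairing function `c`. -/
def c (i j : ℕ) : ℕ := if Odd j then 2 ^ (i + 1) * j else 2 ^ (i + 1) * (j + 1) - 1

/-- The inverse of `c` on positive naturals (returns `(0,0)` at `0`). -/
def c' (n : ℕ) : ℕ × ℕ :=
  (padicValNat 2 (n + n % 2) - 1, (n + n % 2) / 2 ^ padicValNat 2 (n + n % 2) - n % 2)

lemma c'_fst_lt {n : ℕ} (hn : 0 < n) : (c' n).1 < n := by
  have hm : 0 < n + n % 2 := by omega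
  have hdvd : (2 : ℕ) ^ padicValNat 2 (n + n % 2) ∣ (n + n % 2) := pow_padicValNat_dvd
  have hle : (2 : ℕ) ^ padicValNat 2 (n + n % 2) ≤ n + n % 2 := Nat.le_of_dvd hm hdvd
  have hlt : padicValNat 2 (n + n % 2) < 2 ^ padicValNat 2 (n + n % 2) := by
    first
    | exact Nat.lt_two_pow_self
    | exact Nat.lt_two_pow_self _
    | exact Nat.lt_pow_self (by norm_num)
  simp only [c']
  generalize hv : padicValNat 2 (n + n % 2) = v at *
  generalize hp : (2 : ℕ) ^ v = p at *
  omega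

lemma c'_snd_lt {n : ℕ} (hn : 0 < n) : (c' n).2 < n := by
  have hm : 0 < n + n % 2 := by omega
  have h2 : (2 : ℕ) ∣ (n + n % 2) := by omega
  have hv : 1 ≤ padicValNat 2 (n + n % 2) := one_le_padicValNat_of_dvd hm.ne' h2
  have h2le : (2 : ℕ) ≤ 2 ^ padicValNat 2 (n + n % 2) := by
    calc (2:ℕ) = 2 ^ 1 := (pow_one 2).symm
    _ ≤ 2 ^ padicValNat 2 (n + n % 2) := Nat.pow_le_pow_right (by norm_num) hv
  have hle : (n + n % 2) / 2 ^ padicValNat 2 (n + n % 2) ≤ (n + n % 2) / 2 :=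
    Nat.div_le_div_left h2le (by norm_num)
  simp only [c']
  generalize hq : (n + n % 2) / 2 ^ padicValNat 2 (n + n % 2) = q at *
  omega

lemma c'_fst_lt_of_lt {m n : ℕ} (h : m < n) : (c' m).1 < n := by
  rcases Nat.eq_zero_or_pos m with rfl | hm
  · simp [c']; omega
  · exact lt_trans (c'_fst_lt hm) h

lemma c'_snd_lt_of_lt {m n : ℕ} (h : m < n) : (c' m).2 < n := by
  rcases Nat.eq_zero_or_pos m with rfl | hm
  · simp [c']; omega
  · exact lt_trans (c'_snd_lt hm) h

def dual : ℕ → ℕ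
  | 0 => 0
  | n + 1 => c (dual (c' (n + 1)).2) (dual (c' (n + 1)).1)
  decreasing_by
  · exact c'_snd_lt (Nat.succ_pos n)
  · exact c'_fst_lt (Nat.succ_pos n)

/-!
`c` and `c'` are mutually inverse between `ℕ × ℕ` and the positive naturals (both read off the
decomposition of `n + n % 2` as `2 ^ (i + 1) * m` with `m` odd), so every `n > 0` is `c i j` with
`i, j < n`, and `dual (c i j) = c (dual j) (dual i)`. Applying this twice gives
`dual (dual (c i j)) = c (dual (dual i)) (dual (dual j))`, and strong induction closes the argument.
-/

lemma padicValNat_two_pow_mul_of_odd (k : ℕ) {m : ℕ} (hm : Odd m) :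
    padicValNat 2 (2 ^ k * m) = k := by
  rw [padicValNat.mul (by positivity) hm.pos.ne',
    padicValNat.prime_pow, padicValNat.eq_zero_of_not_dvd hm.not_two_dvd_nat, add_zero]

lemma c'_eq_of_add_mod_two_eq {n i m : ℕ} (hm : Odd m) (h : n + n % 2 = 2 ^ (i + 1) * m) :
    c' n = (i, m - n % 2) := by
  simp only [c', h, padicValNat_two_pow_mul_of_odd _ hm, Nat.add_sub_cancel,
    Nat.mul_div_cancel_left _ (Nat.two_pow_pos _)]

lemma c'_c (i j : ℕ) : c' (c i j) = (i, j) := by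
  have h2 : 2 ∣ 2 ^ (i + 1) := dvd_pow_self 2 i.succ_ne_zero
  unfold c
  split_ifs with hj
  · have h : 2 ^ (i + 1) * j % 2 = 0 := Nat.mod_eq_zero_of_dvd (h2.mul_right j)
    have := c'_eq_of_add_mod_two_eq (n := 2 ^ (i + 1) * j) hj (by rw [h, add_zero])
    rwa [h, Nat.sub_zero] at this
  · have hj1 : Odd (j + 1) := (Nat.not_odd_iff_even.mp hj).add_one
    have hpos : 0 < 2 ^ (i + 1) * (j + 1) := by positivity
    have hdvd := h2.mul_right (j + 1)
    have h : (2 ^ (i + 1) * (j + 1) - 1) % 2 = 1 := by omega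
    have := c'_eq_of_add_mod_two_eq (n := 2 ^ (i + 1) * (j + 1) - 1) (i := i) hj1 (by omega)
    rwa [h, Nat.add_sub_cancel] at this

lemma exists_c_eq {n : ℕ} (hn : 0 < n) : ∃ i j, c i j = n := by
  obtain ⟨k, m, hm, hkm⟩ := Nat.exists_eq_two_pow_mul_odd (n := n + n % 2) (by omega)
  obtain ⟨i, rfl⟩ : ∃ i, k = i + 1 := by
    refine Nat.exists_eq_add_one.mpr (Nat.pos_of_ne_zero ?_)
    rintro rfl
    rw [pow_zero, one_mul] at hkm
    have := Nat.odd_iff.mp hm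
    omega
  have hpos : 0 < 2 ^ (i + 1) * m := Nat.mul_pos (Nat.two_pow_pos _) hm.pos
  rcases Nat.even_or_odd n with hn2 | hn2
  · refine ⟨i, m, ?_⟩
    have := Nat.even_iff.mp hn2
    simp only [c, if_pos hm]
    omega
  · refine ⟨i, m - 1, ?_⟩
    have := Nat.odd_iff.mp hn2
    have hm1 : ¬Odd (m - 1) := by
      have := Nat.odd_iff.mp hm
      rw [Nat.not_odd_iff]
      omega
    simp only [c, if_neg hm1, Nat.sub_add_cancel hm.pos]
    omega

lemma c_pos (i j : ℕ) : 0 < c i j := by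
  unfold c
  split_ifs with hj
  · exact Nat.mul_pos (Nat.two_pow_pos _) hj.pos
  · have : 2 ≤ 2 ^ (i + 1) * (j + 1) :=
      le_mul_of_le_of_one_le (Nat.le_self_pow i.succ_ne_zero 2) j.succ_pos
    omega

lemma lt_c_left (i j : ℕ) : i < c i j := by
  simpa [c'_c] using c'_fst_lt (c_pos i j)

lemma lt_c_right (i j : ℕ) : j < c i j := by
  simpa [c'_c] using c'_snd_lt (c_pos i j)

lemma dual_c (i j : ℕ) : dual (c i j) = c (dual j) (dual i) := by
  obtain ⟨n, hn⟩ := Nat.exists_eq_add_one.mpr (c_pos i j)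
  rw [hn, dual, ← hn, c'_c]

theorem dual_involutive (n : ℕ) : dual (dual n) = n := by
  induction n using Nat.strong_induction_on with
  | _ n ih =>
    rcases Nat.eq_zero_or_pos n with rfl | hn
    · simp only [dual]
    obtain ⟨i, j, rfl⟩ := exists_c_eq hn
    rw [dual_c, dual_c, ih i (lt_c_left i j), ih j (lt_c_right i j)]
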